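/- arXiv:2202.08725 — 3 statements merged into one kernel-verified Lean document; each statement's English description precedes it below -/
import Mathlib

section
/- Let P be a preorder whose order relation is symmetric (p ≤ q implies q ≤ p), and suppose there exist functions ψ : P → (P → P) (where P → P carries the pointwise preorder and the full function space is used), φ : (P → P) → P with φ monotone, and suppose ψ(φ(x)) ≤ x pointwise for every function x : P → P. Then all elements of P are equivalent: for all a, b ∈ P, a ≤ b. -/
/-- Cantor's diagonal argument: the function `p ↦ if a ≤ ψ p p then b else a` disagrees, up to
the symmetric order, with every diagonal entry `ψ p p` unless `a ≤ b`. -/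
theorem le_of_forall_exists_diag_le {P : Type*} [Preorder P]
    (hsym : ∀ p q : P, p ≤ q → q ≤ p) (ψ : P → P → P)
    (hψ : ∀ x : P → P, ∃ q, ψ q q ≤ x q) (a b : P) : a ≤ b := by
  classical
  obtain ⟨q, hq⟩ := hψ fun p => if a ≤ ψ p p then b else a
  by_cases ha : a ≤ ψ q q
  · rw [if_pos ha] at hq
    exact ha.trans hq
  · rw [if_neg ha] at hq
    exact absurd (hsym _ _ hq) ha

theorem stmt_14_general {P : Type*} [Preorder P]
    (hsym : ∀ p q : P, p ≤ q → q ≤ p)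
    (ψ : P → (P → P)) (φ : (P → P) → P)
    (hψφ : ∀ x : P → P, ψ (φ x) ≤ x) :
    ∀ a b : P, a ≤ b :=
  le_of_forall_exists_diag_le hsym ψ fun x => ⟨φ x, hψφ x (φ x)⟩

theorem stmt_14 {P : Type*} [Preorder P]
    (hsym : ∀ p q : P, p ≤ q → q ≤ p)
    (ψ : P → (P → P)) (φ : (P → P) → P) (hφ : Monotone φ)
    (hψφ : ∀ x : P → P, ψ (φ x) ≤ x) :
    ∀ a b : P, a ≤ b :=
  stmt_14_general hsym ψ φ hψφ
end

section
/- Let F be a set equipped with a preorder ≤ and two predicates (+) and (−) (a polarized preorder). Let S, L, M be preorders with M complete, let j : S → L be an order embedding, and let p : F → (functions S → M) be such that: (i) f ≤ g in F implies p_f ≤ p_g pointwise; (ii) if f is tagged + then p_f is monotone, and if tagged − then p_f is antitone; (iii) whenever f ≤ g in F with (f tagged + and g tagged −) or (f tagged − and g tagged +), then p_f(x) ≤ p_g(y) for all x, y ∈ S. Then there exists q : F → (functions L → M) with the same three preservation properties (order, polarity) such that q_f ∘ j = p_f for every f ∈ F. -/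
/-!
The three required properties of `q` say exactly that `(f, l) ↦ q f l` is monotone along the
steps `(f, l) → (g, l)` for `f ≤ g`, and `(f, l) → (f, l')` for `l ≤ l'` when `f` is positive
and for `l' ≤ l` when `f` is negative. So take for `q f l` a least upper bound of all `p g s`
with `(g, j s)` below `(f, l)` in the preorder these steps generate, except that at `l = j s`
we take `p f s` itself, as least upper bounds in the preorder `M` are only unique up to
equivalence. This extends `p` because `p g s ≤ p f t` whenever `(g, j s)` is below `(f, j t)`:
along a chain of steps out of `(g, j s)`, `p g s` stays below `p` at every point reachable by
one `F`-step followed by one comparison in `L` allowed by the polarity there, and after a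
change of polarity condition (iii) bounds everything.
-/

open Function Relation

section LUBExtension

variable {X Y M : Type*} [Preorder M] (r : X → X → Prop) {e : Y → X} {φ : Y → M}

theorem isLUB_extend_of_reflTransGen (he : Injective e)
    (hφ : ∀ y y', ReflTransGen r (e y) (e y') → φ y ≤ φ y') {v : X → M}
    (hv : ∀ x, IsLUB (φ '' {y | ReflTransGen r (e y) x}) (v x)) (x : X) :
    IsLUB (φ '' {y | ReflTransGen r (e y) x}) (extend e φ v x) := by
  by_cases hx : ∃ y, e y = x
  · obtain ⟨y, rfl⟩ := hx
    rw [he.extend_apply]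
    refine IsGreatest.isLUB ⟨⟨y, .refl, rfl⟩, ?_⟩
    rintro _ ⟨y', hy', rfl⟩
    exact hφ y' y hy'
  · rw [extend_apply' _ _ _ hx]
    exact hv x

theorem exists_extension_monotone_of_reflTransGen (hM : ∀ T : Set M, ∃ m, IsLUB T m)
    (he : Injective e) (hφ : ∀ y y', ReflTransGen r (e y) (e y') → φ y ≤ φ y') :
    ∃ ψ : X → M, (∀ x x', ReflTransGen r x x' → ψ x ≤ ψ x') ∧ ∀ y, ψ (e y) = φ y := by
  choose v hv using fun x => hM (φ '' {y | ReflTransGen r (e y) x})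
  have hψ := isLUB_extend_of_reflTransGen r he hφ hv
  refine ⟨extend e φ v, fun x x' hxx' => ?_, he.extend_apply φ v⟩
  exact (hψ x).mono (hψ x') (Set.image_mono fun y hy => hy.trans hxx')

end LUBExtension

section Polarized

variable {F S L M : Type*} [Preorder F] [Preorder L] [Preorder M]

inductive PolarStep (pos neg : F → Prop) : F × L → F × L → Prop
  | of_le {f g : F} (l : L) : f ≤ g → PolarStep pos neg (f, l) (g, l)
  | of_pos {f : F} {l l' : L} : pos f → l ≤ l' → PolarStep pos neg (f, l) (f, l')
  | of_neg {f : F} {l l' : L} : neg f → l' ≤ l → PolarStep pos neg (f, l) (f, l')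

/-- The invariant carried along chains of polar steps out of `(g, j s)`. -/
def PolarBound (pos neg : F → Prop) (j : S → L) (p : F → S → M) (g : F) (s : S)
    (b : F × L) : Prop :=
  (∃ t, p g s ≤ p b.1 t) ∧
    ∀ f t, b.1 ≤ f → (b.2 = j t ∨ pos f ∧ b.2 ≤ j t ∨ neg f ∧ j t ≤ b.2) → p g s ≤ p f t

variable {pos neg : F → Prop} {j : S → L} {p : F → S → M}

theorem polarBound_start [Preorder S] (hj_inj : Injective j) (hj_ord : ∀ s s' : S, s ≤ s' ↔ j s ≤ j s')
    (h_ord : ∀ f g : F, f ≤ g → ∀ x : S, p f x ≤ p g x)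
    (h_pos : ∀ f : F, pos f → Monotone (p f)) (h_neg : ∀ f : F, neg f → Antitone (p f))
    (g : F) (s : S) : PolarBound pos neg j p g s (g, j s) := by
  refine ⟨⟨s, le_rfl⟩, fun f t hgf hst => (h_ord g f hgf s).trans ?_⟩
  rcases hst with hst | ⟨hf, hst⟩ | ⟨hf, hts⟩
  · rw [hj_inj hst]
  · exact h_pos f hf ((hj_ord s t).2 hst)
  · exact h_neg f hf ((hj_ord t s).2 hts)

theorem PolarBound.of_polarStep (h_ord : ∀ f g : F, f ≤ g → ∀ x : S, p f x ≤ p g x)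
    (h_wc : ∀ f g : F, f ≤ g →
      ((pos f ∧ neg g) ∨ (neg f ∧ pos g)) → ∀ x y : S, p f x ≤ p g y)
    {g : F} {s : S} {b c : F × L} (hb : PolarBound pos neg j p g s b)
    (hbc : PolarStep pos neg b c) : PolarBound pos neg j p g s c := by
  obtain ⟨⟨t₀, ht₀⟩, hb⟩ := hb
  cases hbc with
  | of_le l hfg =>
    exact ⟨⟨t₀, ht₀.trans (h_ord _ _ hfg t₀)⟩, fun f' t hf' => hb f' t (hfg.trans hf')⟩
  | @of_pos f l l' hf hll' =>
    refine ⟨⟨t₀, ht₀⟩, fun f' t hff' hl' => ?_⟩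
    rcases hl' with rfl | ⟨hf', hl't⟩ | ⟨hf', htl'⟩
    · exact (hb f t le_rfl (.inr (.inl ⟨hf, hll'⟩))).trans (h_ord f f' hff' t)
    · exact hb f' t hff' (.inr (.inl ⟨hf', hll'.trans hl't⟩))
    · exact ht₀.trans (h_wc f f' hff' (.inl ⟨hf, hf'⟩) t₀ t)
  | @of_neg f l l' hf hl'l =>
    refine ⟨⟨t₀, ht₀⟩, fun f' t hff' hl' => ?_⟩
    rcases hl' with rfl | ⟨hf', hl't⟩ | ⟨hf', htl'⟩
    · exact (hb f t le_rfl (.inr (.inr ⟨hf, hl'l⟩))).trans (h_ord f f' hff' t)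
    · exact ht₀.trans (h_wc f f' hff' (.inr ⟨hf, hf'⟩) t₀ t)
    · exact hb f' t hff' (.inr (.inr ⟨hf', htl'.trans hl'l⟩))

theorem polarBound_of_reflTransGen [Preorder S] (hj_inj : Injective j)
    (hj_ord : ∀ s s' : S, s ≤ s' ↔ j s ≤ j s')
    (h_ord : ∀ f g : F, f ≤ g → ∀ x : S, p f x ≤ p g x)
    (h_pos : ∀ f : F, pos f → Monotone (p f)) (h_neg : ∀ f : F, neg f → Antitone (p f))
    (h_wc : ∀ f g : F, f ≤ g →
      ((pos f ∧ neg g) ∨ (neg f ∧ pos g)) → ∀ x y : S, p f x ≤ p g y)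
    {g : F} {s : S} {b : F × L} (h : ReflTransGen (PolarStep pos neg) (g, j s) b) :
    PolarBound pos neg j p g s b := by
  induction h with
  | refl => exact polarBound_start hj_inj hj_ord h_ord h_pos h_neg g s
  | tail _ hbc hb => exact hb.of_polarStep h_ord h_wc hbc

theorem le_of_reflTransGen_polarStep [Preorder S] (hj_inj : Injective j)
    (hj_ord : ∀ s s' : S, s ≤ s' ↔ j s ≤ j s')
    (h_ord : ∀ f g : F, f ≤ g → ∀ x : S, p f x ≤ p g x)
    (h_pos : ∀ f : F, pos f → Monotone (p f)) (h_neg : ∀ f : F, neg f → Antitone (p f))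
    (h_wc : ∀ f g : F, f ≤ g →
      ((pos f ∧ neg g) ∨ (neg f ∧ pos g)) → ∀ x y : S, p f x ≤ p g y)
    {g f : F} {s t : S} (h : ReflTransGen (PolarStep pos neg) (g, j s) (f, j t)) :
    p g s ≤ p f t :=
  (polarBound_of_reflTransGen hj_inj hj_ord h_ord h_pos h_neg h_wc h).2 f t le_rfl (.inl rfl)

end Polarized

/-- Extension Lemma: a polarity- and order-preserving map `p : F → (S → M)`
with the weak-completeness-like property extends along an order embedding
`j : S → L` to a map `q : F → (L → M)`. -/
theorem stmt_15 {F S L M : Type*} [Preorder F] [Preorder S] [Preorder L] [Preorder M]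
    (pos neg : F → Prop)
    (hM : ∀ T : Set M, ∃ v, IsLUB T v)
    (j : S → L) (hj_inj : Function.Injective j)
    (hj_ord : ∀ s s' : S, s ≤ s' ↔ j s ≤ j s')
    (p : F → S → M)
    (h_ord : ∀ f g : F, f ≤ g → ∀ x : S, p f x ≤ p g x)
    (h_pos : ∀ f : F, pos f → Monotone (p f))
    (h_neg : ∀ f : F, neg f → Antitone (p f))
    (h_wc : ∀ f g : F, f ≤ g →
      ((pos f ∧ neg g) ∨ (neg f ∧ pos g)) → ∀ x y : S, p f x ≤ p g y) :
    ∃ q : F → L → M,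
      (∀ f g : F, f ≤ g → ∀ x : L, q f x ≤ q g x) ∧
      (∀ f : F, pos f → Monotone (q f)) ∧
      (∀ f : F, neg f → Antitone (q f)) ∧
      (∀ f : F, ∀ s : S, q f (j s) = p f s) := by
  obtain ⟨ψ, hψ_mono, hψ_ext⟩ :=
    exists_extension_monotone_of_reflTransGen (PolarStep pos neg) (φ := fun x => p x.1 x.2) hM
      (injective_id.prodMap hj_inj) fun _ _ h =>
        le_of_reflTransGen_polarStep hj_inj hj_ord h_ord h_pos h_neg h_wc h
  exact ⟨fun f l => ψ (f, l),
    fun f g hfg l => hψ_mono _ _ (.single (.of_le l hfg)),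
    fun f hf l l' hll' => hψ_mono _ _ (.single (.of_pos hf hll')),
    fun f hf l l' hl'l => hψ_mono _ _ (.single (.of_neg hf hl'l)),
    fun f s => hψ_ext (f, s)⟩
end

section
/- In the Extension Lemma construction, where q_f(x) is defined as p_f(s) when x = j(s), and otherwise as the join of A(f,x) ∪ B(f,x) ∪ C(f) ∪ D(f) with A(f,x) = {p_h(s) : h tagged +, h ≤ f, j(s) ≤ x}, B(f,x) = {p_h(s) : h tagged −, h ≤ f, x ≤ j(s)}, C(f) = {p_h(s) : ∃k tagged + with k ≤ f and h tagged − with h ≤ k}, D(f) = {p_h(s) : ∃k tagged − with k ≤ f and h tagged + with h ≤ k}: if x = j(s), then every element of A(f,x) ∪ B(f,x) ∪ C(f) ∪ D(f) is ≤ p_f(s). -/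
theorem stmt_16_general {F S L M : Type*} [Preorder F] [Preorder S] [Preorder L] [Preorder M]
    (pos neg : F → Prop)
    (j : S → L)
    (hj_ord : ∀ s s' : S, s ≤ s' ↔ j s ≤ j s')
    (p : F → S → M)
    (h_ord : ∀ f g : F, f ≤ g → ∀ x : S, p f x ≤ p g x)
    (h_pos : ∀ f : F, pos f → Monotone (p f))
    (h_neg : ∀ f : F, neg f → Antitone (p f))
    (h_wc : ∀ f g : F, f ≤ g →
      ((pos f ∧ neg g) ∨ (neg f ∧ pos g)) → ∀ x y : S, p f x ≤ p g y) :
    ∀ (f : F) (s : S), ∀ m : M,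
      (m ∈ {m | ∃ h s', pos h ∧ h ≤ f ∧ j s' ≤ j s ∧ m = p h s'} ∪
           {m | ∃ h s', neg h ∧ h ≤ f ∧ j s ≤ j s' ∧ m = p h s'} ∪
           {m | ∃ h k s', pos k ∧ k ≤ f ∧ neg h ∧ h ≤ k ∧ m = p h s'} ∪
           {m | ∃ h k s', neg k ∧ k ≤ f ∧ pos h ∧ h ≤ k ∧ m = p h s'}) →
      m ≤ p f s := by
  rintro f s _ (((⟨h, s', hh, hhf, hjs, rfl⟩ | ⟨h, s', hh, hhf, hjs, rfl⟩) |
      ⟨h, k, s', hk, hkf, hh, hhk, rfl⟩) | ⟨h, k, s', hk, hkf, hh, hhk, rfl⟩)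
  · exact (h_pos h hh ((hj_ord s' s).2 hjs)).trans (h_ord h f hhf s)
  · exact (h_neg h hh ((hj_ord s s').2 hjs)).trans (h_ord h f hhf s)
  · exact (h_wc h k hhk (.inr ⟨hh, hk⟩) s' s).trans (h_ord k f hkf s)
  · exact (h_wc h k hhk (.inl ⟨hh, hk⟩) s' s).trans (h_ord k f hkf s)

theorem stmt_16 {F S L M : Type*} [Preorder F] [Preorder S] [Preorder L] [Preorder M]
    (pos neg : F → Prop)
    (hM : ∀ T : Set M, ∃ v, IsLUB T v)
    (j : S → L) (hj_inj : Function.Injective j)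
    (hj_ord : ∀ s s' : S, s ≤ s' ↔ j s ≤ j s')
    (p : F → S → M)
    (h_ord : ∀ f g : F, f ≤ g → ∀ x : S, p f x ≤ p g x)
    (h_pos : ∀ f : F, pos f → Monotone (p f))
    (h_neg : ∀ f : F, neg f → Antitone (p f))
    (h_wc : ∀ f g : F, f ≤ g →
      ((pos f ∧ neg g) ∨ (neg f ∧ pos g)) → ∀ x y : S, p f x ≤ p g y) :
    ∀ (f : F) (s : S), ∀ m : M,
      (m ∈ {m | ∃ h s', pos h ∧ h ≤ f ∧ j s' ≤ j s ∧ m = p h s'} ∪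
           {m | ∃ h s', neg h ∧ h ≤ f ∧ j s ≤ j s' ∧ m = p h s'} ∪
           {m | ∃ h k s', pos k ∧ k ≤ f ∧ neg h ∧ h ≤ k ∧ m = p h s'} ∪
           {m | ∃ h k s', neg k ∧ k ≤ f ∧ pos h ∧ h ≤ k ∧ m = p h s'}) →
      m ≤ p f s :=
  stmt_16_general pos neg j hj_ord p h_ord h_pos h_neg h_wc
end
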